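/- arXiv:2605.31200 — 2 statements merged into one kernel-verified Lean document; each statement's English description precedes it below -/
import Mathlib

section
/- Let P be a probability measure on ℝ^p and let c : [0,1]^p → ℝ be Lebesgue-integrable. Suppose f ∈ L²(P) satisfies, for P-almost every x, f(x) = ∫_{[0,1]^p} c(t) · ∏_{j=1}^p 1(t_j ≤ x_j) dt (the anchored mixed-derivative integral representation, with c playing the role of the highest-order mixed partial derivative D_{(1,…,1)}f). Let 𝒟 ⊆ L²(P) be the dictionary of all g of the form g(x) = ∏_{j=1}^p h_j(x_j) with each h_j : ℝ → ℝ≥0 a nonnegative step function (piecewise constant on a finite partition of ℝ into intervals), g ≥ 0, and ‖g‖_{L²(P)} = 1. Let (f_r)_{r≥0} be an orthogonal greedy approximation sequence: f₀ = 0, and for each ℓ ≥ 1 there is g_ℓ ∈ 𝒟 with |⟨f − f_{ℓ−1}, g_ℓ⟩_{L²(P)}| = sup_{g ∈ 𝒟} |⟨f − f_{ℓ−1}, g⟩_{L²(P)}|, and f_ℓ is the orthogonal projection of f onto the span of {g₁, …, g_ℓ}. Then for every r ≥ 1, ‖f − f_r‖_{L²(P)} ≤ 2·‖c‖_{L¹([0,1]^p)}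 / √r. -/
/-!
By Fubini, `⟪r, f⟫ = ∫ c(t) ⟪r, h_t⟫ dt`, and `h_t / ‖h_t‖` is an atom of `𝒟` with `‖h_t‖ ≤ 1`;
hence `⟪r, f⟫ ≤ B · sup_{d ∈ 𝒟} |⟪r, d⟫|` for every `r`, with `B = ‖c‖_{L¹}`.
For the greedy residual `r_ℓ = f - f_ℓ` orthogonality gives `⟪r_ℓ, f⟫ = ‖r_ℓ‖²`, so
`a_ℓ = ‖r_ℓ‖² ≤ B |⟪r_ℓ, g_{ℓ+1}⟫|`, while `f_{ℓ+1}` beats `f_ℓ + ⟪r_ℓ, g_{ℓ+1}⟫ g_{ℓ+1}`, so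
`a_{ℓ+1} ≤ a_ℓ - ⟪r_ℓ, g_{ℓ+1}⟫²`. Together `a_{ℓ+1} ≤ a_ℓ (1 - a_ℓ / B²)`, and induction gives
`a_ℓ ≤ B² / (ℓ + 1)` (DeVore–Temlyakov).
-/

open MeasureTheory

/-- The separable indicator product `h_t(x) = ∏_j 1(t_j ≤ x_j)`. -/
noncomputable def sepIndicator (p : ℕ) (t x : Fin p → ℝ) : ℝ :=
  ∏ j, if t j ≤ x j then (1 : ℝ) else 0

/-- A step function on `ℝ`: a function that is constant on each member of a
finite partition of `ℝ` into intervals (order-connected sets). -/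
def IsStepFunction (h : ℝ → ℝ) : Prop :=
  ∃ (n : ℕ) (I : Fin n → Set ℝ),
    (∀ i, (I i).OrdConnected) ∧
    (Pairwise fun i j => Disjoint (I i) (I j)) ∧
    (⋃ i, I i) = Set.univ ∧
    ∀ i, ∀ x ∈ I i, ∀ y ∈ I i, h x = h y

/-- The unit cube `[0,1]^p`. -/
def unitBox (p : ℕ) : Set (Fin p → ℝ) := Set.univ.pi fun _ => Set.Icc (0 : ℝ) 1

open RealInnerProductSpace

theorem mul_add_one_le_sq_of_le_sub_sq {a lam : ℕ → ℝ} {B : ℝ} (ha : ∀ n, 0 ≤ a n)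
    (hcorr : ∀ n, a n ≤ B * |lam n|) (hstep : ∀ n, a (n + 1) ≤ a n - lam n ^ 2) (n : ℕ) :
    a n * (n + 1) ≤ B ^ 2 := by
  have hdecay : ∀ n, a n ^ 2 ≤ B ^ 2 * (a n - a (n + 1)) := fun n => by
    have hsq : a n ^ 2 ≤ B ^ 2 * lam n ^ 2 := by
      rw [← sq_abs (lam n), ← mul_pow]; exact pow_le_pow_left₀ (ha n) (hcorr n) 2
    nlinarith [hstep n, sq_nonneg B]
  induction n with
  | zero =>
    have := hdecay 0
    have : 0 ≤ B ^ 2 * a 1 := mul_nonneg (sq_nonneg B) (ha 1)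
    push_cast
    nlinarith [ha 0]
  | succ n ih =>
    push_cast
    rcases eq_or_ne B 0 with hB | hB
    · have : a n = 0 := by nlinarith [hdecay n, hstep n, ha (n + 1)]
      nlinarith [hstep n, ha (n + 1)]
    · have hB2 : 0 < B ^ 2 := by positivity
      -- With `x = aₙ`: `B⁴ - (n+2)(B² x - x²) ≥ (B² - (n+1) x)(B² - x) ≥ 0` since `(n+1) x ≤ B²`.
      refine le_of_mul_le_mul_right ?_ hB2
      nlinarith [hdecay n, mul_nonneg (sub_nonneg.2 ih) (by nlinarith [ha n] : 0 ≤ B ^ 2 - a n),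
        ha n, ha (n + 1)]

section OrthogonalGreedy

variable {E : Type*} [NormedAddCommGroup E] [InnerProductSpace ℝ E]

theorem norm_sub_sq_le_of_forall_inner_eq_zero {S : Submodule ℝ E} {f u v : E} (hu : u ∈ S)
    (hperp : ∀ s ∈ S, ⟪f - u, s⟫ = 0) (hv : v ∈ S) : ‖f - u‖ ^ 2 ≤ ‖f - v‖ ^ 2 := by
  have hdecomp : f - v = (f - u) + (u - v) := by abel
  rw [hdecomp, norm_add_sq_real, hperp _ (S.sub_mem hu hv)]
  nlinarith [sq_nonneg ‖u - v‖]

theorem norm_sub_add_inner_smul_sq {f v w : E} (hw : ‖w‖ = 1) :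
    ‖f - (v + ⟪f - v, w⟫ • w)‖ ^ 2 = ‖f - v‖ ^ 2 - ⟪f - v, w⟫ ^ 2 := by
  rw [← sub_sub, norm_sub_sq_real, real_inner_smul_right, norm_smul, hw, Real.norm_eq_abs,
    mul_one, sq_abs]
  ring

/-- The atoms are `g 1, g 2, …`; `g 0` plays no role. -/
structure IsOrthogonalGreedy (𝒟 : Set E) (f : E) (F g : ℕ → E) : Prop where
  zero : F 0 = 0
  select : ∀ ℓ : ℕ, 1 ≤ ℓ → g ℓ ∈ 𝒟 ∧
    ∀ g' ∈ 𝒟, |⟪f - F (ℓ - 1), g'⟫| ≤ |⟪f - F (ℓ - 1), g ℓ⟫|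
  proj : ∀ ℓ : ℕ, 1 ≤ ℓ →
    F ℓ ∈ Submodule.span ℝ (g '' {k | 1 ≤ k ∧ k ≤ ℓ}) ∧
    ∀ v ∈ Submodule.span ℝ (g '' {k | 1 ≤ k ∧ k ≤ ℓ}), ⟪f - F ℓ, v⟫ = 0

namespace IsOrthogonalGreedy

variable {𝒟 : Set E} {f : E} {F g : ℕ → E}

theorem inner_sub_self_eq_norm_sq (hO : IsOrthogonalGreedy 𝒟 f F g) (ℓ : ℕ) :
    ⟪f - F ℓ, f⟫ = ‖f - F ℓ‖ ^ 2 := by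
  have hperp : ⟪f - F ℓ, F ℓ⟫ = 0 := by
    rcases Nat.eq_zero_or_pos ℓ with rfl | hℓ
    · rw [hO.zero, inner_zero_right]
    · exact (hO.proj ℓ hℓ).2 _ (hO.proj ℓ hℓ).1
  rw [← real_inner_self_eq_norm_sq, inner_sub_right _ f (F ℓ), hperp, sub_zero]

theorem mem_span_succ (hO : IsOrthogonalGreedy 𝒟 f F g) (ℓ : ℕ) :
    F ℓ ∈ Submodule.span ℝ (g '' {k | 1 ≤ k ∧ k ≤ ℓ + 1}) := by
  rcases Nat.eq_zero_or_pos ℓ with rfl | hℓ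
  · rw [hO.zero]; exact Submodule.zero_mem _
  · exact Submodule.span_mono (Set.image_mono fun _ hk => And.imp_right (le_trans · ℓ.le_succ) hk)
      (hO.proj ℓ hℓ).1

theorem norm_sub_sq_le (hO : IsOrthogonalGreedy 𝒟 f F g) (h𝒟 : ∀ d ∈ 𝒟, ‖d‖ = 1) (ℓ : ℕ) :
    ‖f - F (ℓ + 1)‖ ^ 2 ≤ ‖f - F ℓ‖ ^ 2 - ⟪f - F ℓ, g (ℓ + 1)⟫ ^ 2 := by
  obtain ⟨hF, hperp⟩ := hO.proj (ℓ + 1) ℓ.succ_pos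
  have hg : g (ℓ + 1) ∈ Submodule.span ℝ (g '' {k | 1 ≤ k ∧ k ≤ ℓ + 1}) :=
    Submodule.subset_span (Set.mem_image_of_mem g ⟨ℓ.succ_pos, le_rfl⟩)
  rw [← norm_sub_add_inner_smul_sq (h𝒟 _ (hO.select (ℓ + 1) ℓ.succ_pos).1)]
  exact norm_sub_sq_le_of_forall_inner_eq_zero hF hperp
    (Submodule.add_mem _ (hO.mem_span_succ ℓ) (Submodule.smul_mem _ _ hg))

theorem norm_sub_sq_le_mul_abs_inner (hO : IsOrthogonalGreedy 𝒟 f F g) {B : ℝ}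
    (hf : ∀ r : E, ∀ M, 0 ≤ M → (∀ d ∈ 𝒟, |⟪r, d⟫| ≤ M) → ⟪r, f⟫ ≤ B * M) (ℓ : ℕ) :
    ‖f - F ℓ‖ ^ 2 ≤ B * |⟪f - F ℓ, g (ℓ + 1)⟫| := by
  rw [← hO.inner_sub_self_eq_norm_sq]
  exact hf _ _ (abs_nonneg _) (hO.select (ℓ + 1) ℓ.succ_pos).2

/-- `hf` says that `f` lies in `B` times the closed symmetric convex hull of `𝒟`. -/
theorem norm_sub_sq_mul_le (hO : IsOrthogonalGreedy 𝒟 f F g) (h𝒟 : ∀ d ∈ 𝒟, ‖d‖ = 1)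
    {B : ℝ} (hf : ∀ r : E, ∀ M, 0 ≤ M → (∀ d ∈ 𝒟, |⟪r, d⟫| ≤ M) → ⟪r, f⟫ ≤ B * M) (n : ℕ) :
    ‖f - F n‖ ^ 2 * (n + 1) ≤ B ^ 2 :=
  mul_add_one_le_sq_of_le_sub_sq (fun _ => sq_nonneg _) (hO.norm_sub_sq_le_mul_abs_inner hf)
    (hO.norm_sub_sq_le h𝒟) n

end IsOrthogonalGreedy

end OrthogonalGreedy

section IntegralRepresentation

variable {X T : Type*} [MeasurableSpace X] [MeasurableSpace T] {P : Measure X} [IsFiniteMeasure P]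
  {μ : Measure T} [SFinite μ]

theorem abs_inner_le_of_ae_eq_integral {c : T → ℝ} (hc : Integrable c μ) {φ : T → X → ℝ}
    (hφ : Measurable (Function.uncurry φ)) (hφ1 : ∀ t x, |φ t x| ≤ 1) {f : Lp ℝ 2 P}
    (hf : ∀ᵐ x ∂P, f x = ∫ t, c t * φ t x ∂μ) (r : Lp ℝ 2 P) {M : ℝ}
    (hM : ∀ t, |∫ x, r x * φ t x ∂P| ≤ M) :
    |⟪r, f⟫| ≤ (∫ t, |c t| ∂μ) * M := by
  have hint : Integrable (fun z : X × T => r z.1 * (c z.2 * φ z.2 z.1)) (P.prod μ) := by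
    refine ((Lp.memLp r).integrable one_le_two |>.mul_prod hc).mono ?_ (.of_forall fun z => ?_)
    · exact (Lp.aestronglyMeasurable r).comp_fst.mul
        (hc.aestronglyMeasurable.comp_snd.mul (hφ.comp measurable_swap).aestronglyMeasurable)
    · simpa [abs_mul, mul_assoc] using mul_le_mul_of_nonneg_left
        (mul_le_of_le_one_right (abs_nonneg _) (hφ1 z.2 z.1)) (abs_nonneg (r z.1))
  have hswap : ⟪r, f⟫ = ∫ t, c t * ∫ x, r x * φ t x ∂P ∂μ := calc
    ⟪r, f⟫ = ∫ x, ∫ t, r x * (c t * φ t x) ∂μ ∂P := by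
      rw [L2.inner_def]
      refine integral_congr_ae (hf.mono fun x hx => ?_)
      dsimp only
      rw [RCLike.inner_apply, conj_trivial, hx, ← integral_mul_const]
      simp only [mul_comm (r x)]
    _ = ∫ t, ∫ x, r x * (c t * φ t x) ∂P ∂μ := integral_integral_swap hint
    _ = ∫ t, c t * ∫ x, r x * φ t x ∂P ∂μ := by
      simp only [← integral_const_mul, mul_left_comm (c _)]
  rw [hswap, ← Real.norm_eq_abs, ← integral_mul_const]
  refine norm_integral_le_of_norm_le (hc.abs.mul_const M) (.of_forall fun t => ?_)
  rw [norm_mul, Real.norm_eq_abs, Real.norm_eq_abs]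
  exact mul_le_mul_of_nonneg_left (hM t) (abs_nonneg _)

end IntegralRepresentation

section SeparableDictionary

variable {p : ℕ}

theorem measurable_uncurry_sepIndicator : Measurable (Function.uncurry (sepIndicator p)) := by
  unfold Function.uncurry sepIndicator
  exact Finset.measurable_prod _ fun _ _ => Measurable.ite
    (measurableSet_le measurable_fst.eval measurable_snd.eval) measurable_const measurable_const

theorem abs_sepIndicator_le_one (t x : Fin p → ℝ) : |sepIndicator p t x| ≤ 1 := by
  rw [sepIndicator, Finset.abs_prod]
  exact Finset.prod_le_one (fun _ _ => abs_nonneg _) fun _ _ => by split_ifs <;> simp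

theorem sepIndicator_nonneg (t x : Fin p → ℝ) : 0 ≤ sepIndicator p t x :=
  Finset.prod_nonneg fun _ _ => by split_ifs <;> norm_num

theorem isStepFunction_ite_le (a u v : ℝ) : IsStepFunction fun s => if a ≤ s then u else v := by
  refine ⟨2, ![Set.Iio a, Set.Ici a], ?_, ?_, ?_, ?_⟩
  · exact Fin.forall_fin_two.2 ⟨Set.ordConnected_Iio, Set.ordConnected_Ici⟩
  · intro i j hij
    fin_cases i <;> fin_cases j <;> simp_all [Set.Iio_disjoint_Ici, Set.Ici_disjoint_Iio]
  · exact Set.eq_univ_of_forall fun s =>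
      Set.mem_iUnion.2 (Fin.exists_fin_two.2 (by simpa using lt_or_ge s a))
  · intro i x hx y hy
    fin_cases i <;> simp_all [not_le_of_gt]

/-- For `p ≥ 1` the factor `α` is absorbed into the first coordinate; for `p = 0` the product is
empty, whence `hα1`. -/
theorem exists_step_prod_eq_mul_sepIndicator (t : Fin p → ℝ) {α : ℝ} (hα : 0 ≤ α)
    (hα1 : p = 0 → α = 1) : ∃ h : Fin p → ℝ → ℝ, (∀ j, IsStepFunction (h j)) ∧
      (∀ j s, 0 ≤ h j s) ∧ ∀ x, α * sepIndicator p t x = ∏ j, h j (x j) := by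
  cases p with
  | zero => exact ⟨fun _ _ => 1, Fin.elim0, Fin.elim0, by simp [sepIndicator, hα1 rfl]⟩
  | succ p =>
    refine ⟨fun j s => if t j ≤ s then (if j = 0 then α else 1) else 0,
      fun j => isStepFunction_ite_le _ _ _, fun j s => by dsimp only; split_ifs <;> simp [hα],
      fun x => ?_⟩
    simp only [sepIndicator, Finset.prod_ite_zero, Finset.prod_ite_eq', Finset.mem_univ,
      if_true, Finset.prod_const_one, mul_ite, mul_one, mul_zero]

end SeparableDictionary

section SeparableDictionaryLp

variable {p : ℕ} (P : Measure (Fin p → ℝ))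

def nonnegSepStepDict : Set (Lp ℝ 2 P) :=
  {g : Lp ℝ 2 P | (∃ h : Fin p → ℝ → ℝ,
    (∀ j, IsStepFunction (h j)) ∧ (∀ j s, 0 ≤ h j s) ∧
    (g : (Fin p → ℝ) → ℝ) =ᵐ[P] fun x => ∏ j, h j (x j)) ∧
    (∀ᵐ x ∂P, 0 ≤ (g : (Fin p → ℝ) → ℝ) x) ∧ ‖g‖ = 1}

section FiniteMeasure

variable [IsFiniteMeasure P]

theorem memLp_sepIndicator (t : Fin p → ℝ) : MemLp (sepIndicator p t) 2 P :=
  .of_bound (measurable_uncurry_sepIndicator.comp measurable_prodMk_left).aestronglyMeasurable 1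
    (.of_forall fun x => abs_sepIndicator_le_one t x)

noncomputable def sepIndicatorLp (t : Fin p → ℝ) : Lp ℝ 2 P :=
  (memLp_sepIndicator P t).toLp _

theorem inner_sepIndicatorLp (r : Lp ℝ 2 P) (t : Fin p → ℝ) :
    ⟪r, sepIndicatorLp P t⟫ = ∫ x, r x * sepIndicator p t x ∂P := by
  rw [L2.inner_def]
  refine integral_congr_ae ((memLp_sepIndicator P t).coeFn_toLp.mono fun x hx => ?_)
  dsimp only
  rw [RCLike.inner_apply, conj_trivial, sepIndicatorLp, hx, mul_comm]

end FiniteMeasure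

variable [IsProbabilityMeasure P]

theorem norm_sepIndicatorLp_le_one (t : Fin p → ℝ) : ‖sepIndicatorLp P t‖ ≤ 1 := by
  have := Lp.norm_le_of_ae_bound (f := sepIndicatorLp P t) zero_le_one
    ((memLp_sepIndicator P t).coeFn_toLp.mono fun x hx => by
      rw [sepIndicatorLp, hx, Real.norm_eq_abs]; exact abs_sepIndicator_le_one t x)
  simpa [measureUnivNNReal] using this

theorem norm_sepIndicatorLp_eq_one_of_eq_zero (hp : p = 0) (t : Fin p → ℝ) :
    ‖sepIndicatorLp P t‖ = 1 := by
  subst hp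
  have hone : sepIndicator 0 t = fun _ => 1 := funext fun x => by simp [sepIndicator]
  rw [sepIndicatorLp, Lp.norm_toLp, hone, eLpNorm_const _ two_ne_zero (NeZero.ne P)]
  simp

theorem inv_norm_smul_sepIndicatorLp_mem (t : Fin p → ℝ) (ht : sepIndicatorLp P t ≠ 0) :
    ‖sepIndicatorLp P t‖⁻¹ • sepIndicatorLp P t ∈ nonnegSepStepDict P := by
  set α := ‖sepIndicatorLp P t‖⁻¹
  have hα : 0 ≤ α := inv_nonneg.2 (norm_nonneg _)
  have hcoe : ⇑(α • sepIndicatorLp P t) =ᵐ[P] fun x => α * sepIndicator p t x :=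
    (Lp.coeFn_smul _ _).trans ((memLp_sepIndicator P t).coeFn_toLp.mono fun x hx => by
      simp [sepIndicatorLp, hx])
  obtain ⟨h, hstep, hnonneg, hprod⟩ := exists_step_prod_eq_mul_sepIndicator t hα
    fun hp => by simp [α, norm_sepIndicatorLp_eq_one_of_eq_zero P hp]
  refine ⟨⟨h, hstep, hnonneg, hcoe.trans (.of_forall hprod)⟩,
    hcoe.mono fun x hx => hx ▸ mul_nonneg hα (sepIndicator_nonneg t x), ?_⟩
  rw [norm_smul, Real.norm_of_nonneg hα, inv_mul_cancel₀ (norm_ne_zero_iff.2 ht)]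

theorem abs_integral_mul_sepIndicator_le {r : Lp ℝ 2 P} {M : ℝ} (hM : 0 ≤ M)
    (hr : ∀ d ∈ nonnegSepStepDict P, |⟪r, d⟫| ≤ M) (t : Fin p → ℝ) :
    |∫ x, r x * sepIndicator p t x ∂P| ≤ M := by
  rw [← inner_sepIndicatorLp]
  by_cases ht : sepIndicatorLp P t = 0
  · simpa [ht] using hM
  have hmem := hr _ (inv_norm_smul_sepIndicatorLp_mem P t ht)
  rw [real_inner_smul_right, abs_mul, abs_inv, abs_norm,
    inv_mul_le_iff₀ (norm_pos_iff.2 ht)] at hmem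
  exact hmem.trans (mul_le_of_le_one_left hM (norm_sepIndicatorLp_le_one P t))

end SeparableDictionaryLp

/-- **Approximation rate of the orthogonal greedy algorithm over the positive
separable dictionary.** Suppose `f ∈ L²(P)` has the anchored mixed-derivative
representation `f(x) = ∫_{[0,1]^p} c(t) h_t(x) dt` (`P`-a.e.) with
`c ∈ L¹([0,1]^p)`, and let `𝒟` be the dictionary of unit-norm nonnegative
separable products of nonnegative step functions.  If `(f_r)` is an OGA
sequence (`f₀ = 0`, at each step an atom of maximal absolute correlation with
the residual is selected, and `f_ℓ` is the orthogonal projection of `f` onto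
the span of the selected atoms), then
`‖f − f_r‖_{L²(P)} ≤ 2 ‖c‖_{L¹([0,1]^p)} / √r` for every `r ≥ 1`. -/
theorem oga_separable_rate
    (p : ℕ) (P : Measure (Fin p → ℝ)) [IsProbabilityMeasure P]
    (c : (Fin p → ℝ) → ℝ)
    (hc : IntegrableOn c (unitBox p) volume)
    (f : Lp ℝ 2 P)
    (hf : ∀ᵐ x ∂P, (f : (Fin p → ℝ) → ℝ) x
        = ∫ t in unitBox p, c t * sepIndicator p t x ∂volume)
    (𝒟 : Set (Lp ℝ 2 P))
    (h𝒟 : 𝒟 = {g : Lp ℝ 2 P | (∃ h : Fin p → ℝ → ℝ,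
        (∀ j, IsStepFunction (h j)) ∧ (∀ j s, 0 ≤ h j s) ∧
        (g : (Fin p → ℝ) → ℝ) =ᵐ[P] fun x => ∏ j, h j (x j)) ∧
        (∀ᵐ x ∂P, 0 ≤ (g : (Fin p → ℝ) → ℝ) x) ∧ ‖g‖ = 1})
    (F : ℕ → Lp ℝ 2 P) (g : ℕ → Lp ℝ 2 P)
    (hF0 : F 0 = 0)
    (hsel : ∀ ℓ : ℕ, 1 ≤ ℓ → g ℓ ∈ 𝒟 ∧
      ∀ g' ∈ 𝒟, |(inner ℝ (f - F (ℓ - 1)) g' : ℝ)| ≤ |(inner ℝ (f - F (ℓ - 1)) (g ℓ) : ℝ)|)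
    (hproj : ∀ ℓ : ℕ, 1 ≤ ℓ →
      F ℓ ∈ Submodule.span ℝ (g '' {k | 1 ≤ k ∧ k ≤ ℓ}) ∧
      ∀ v ∈ Submodule.span ℝ (g '' {k | 1 ≤ k ∧ k ≤ ℓ}),
        (inner ℝ (f - F ℓ) v : ℝ) = 0) :
    ∀ r : ℕ, 1 ≤ r →
      ‖f - F r‖ ≤ 2 * (∫ t in unitBox p, |c t| ∂volume) / Real.sqrt r := by
  change 𝒟 = nonnegSepStepDict P at h𝒟
  subst h𝒟
  set B := ∫ t in unitBox p, |c t| ∂volume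
  have hvar (u : Lp ℝ 2 P) (M : ℝ) (hM : 0 ≤ M) (hu : ∀ d ∈ nonnegSepStepDict P, |⟪u, d⟫| ≤ M) :
      ⟪u, f⟫ ≤ B * M :=
    (le_abs_self _).trans <| abs_inner_le_of_ae_eq_integral hc measurable_uncurry_sepIndicator
      abs_sepIndicator_le_one hf u (abs_integral_mul_sepIndicator_le P hM hu)
  intro r hr
  have hrate := IsOrthogonalGreedy.norm_sub_sq_mul_le ⟨hF0, hsel, hproj⟩ (fun _ hd => hd.2.2)
    hvar r
  have hr0 : (0 : ℝ) < r := by exact_mod_cast hr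
  have hB : 0 ≤ B := integral_nonneg fun _ => abs_nonneg _
  rw [le_div_iff₀ (Real.sqrt_pos.2 hr0), ← pow_le_pow_iff_left₀ (by positivity) (by positivity)
    two_ne_zero, mul_pow, Real.sq_sqrt hr0.le]
  nlinarith [sq_nonneg ‖f - F r‖]
end

section
/- Let a₁, a₂, b₁, b₂ : ℝ → ℝ be arbitrary functions. Let A = [−1, 0) × [−1, 0) and B = [0, 1] × [0, 1], and define on 𝒳 = A ∪ B the function m(x₁, x₂) = 1_A(x₁,x₂)·a₁(x₁)a₂(x₂) + 1_B(x₁,x₂)·b₁(x₁)b₂(x₂). Define the three rank-one factorizations m⁽¹⁾ = (1_{[−1,0)}a₁ + 1_{[0,1]}b₁)·(1_{[−1,0)}a₂ + 1_{[0,1]}b₂), m⁽²⁾ = (−1_{[−1,0)}a₁ + 1_{[0,1]}b₁)·(−1_{[−1,0)}a₂ + 1_{[0,1]}b₂), and m⁽³⁾ = (−1_{[−1,0)}a₁ − 1_{[0,1]}b₁)·(−1_{[−1,0)}a₂ − 1_{[0,1]}b₂), each evaluated as (factor in x₁)·(factor in x₂). Then m⁽¹⁾(x) = m⁽²⁾(x)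 = m⁽³⁾(x) = m(x) for every x ∈ 𝒳. Hence a separable (rank-one) representation is not identifiable from its values on a non-rectangular support: three distinct factorizations agree with m on all of 𝒳. -/
/-- A univariate factor built from two pieces: `f` on `[−1, 0)` and `g` on
`[0, 1]` (and zero elsewhere). -/
noncomputable def pieceFactor (f g : ℝ → ℝ) (s : ℝ) : ℝ :=
  (Set.Ico (-1 : ℝ) 0).indicator f s + (Set.Icc (0 : ℝ) 1).indicator g s

/-- **Non-identifiability of rank-one factorizations on a non-rectangular
support.** On `𝒳 = A ∪ B` with `A = [−1,0) × [−1,0)` and `B = [0,1] × [0,1]`,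
the function `m = 1_A · a₁(x₁)a₂(x₂) + 1_B · b₁(x₁)b₂(x₂)` agrees on all of
`𝒳` with each of the three distinct rank-one factorizations
`m⁽¹⁾ = (1_{[−1,0)}a₁ + 1_{[0,1]}b₁)(1_{[−1,0)}a₂ + 1_{[0,1]}b₂)`,
`m⁽²⁾ = (−1_{[−1,0)}a₁ + 1_{[0,1]}b₁)(−1_{[−1,0)}a₂ + 1_{[0,1]}b₂)`,
`m⁽³⁾ = (−1_{[−1,0)}a₁ − 1_{[0,1]}b₁)(−1_{[−1,0)}a₂ − 1_{[0,1]}b₂)`. -/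
theorem rank_one_nonidentifiable_support
    (a₁ a₂ b₁ b₂ : ℝ → ℝ) :
    ∀ x : ℝ × ℝ,
      x ∈ (Set.Ico (-1 : ℝ) 0 ×ˢ Set.Ico (-1 : ℝ) 0) ∪
          (Set.Icc (0 : ℝ) 1 ×ˢ Set.Icc (0 : ℝ) 1) →
      (pieceFactor a₁ b₁ x.1 * pieceFactor a₂ b₂ x.2
          = (Set.Ico (-1 : ℝ) 0 ×ˢ Set.Ico (-1 : ℝ) 0).indicator
              (fun y => a₁ y.1 * a₂ y.2) x
            + (Set.Icc (0 : ℝ) 1 ×ˢ Set.Icc (0 : ℝ) 1).indicator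
              (fun y => b₁ y.1 * b₂ y.2) x) ∧
      (pieceFactor (fun s => -a₁ s) b₁ x.1 * pieceFactor (fun s => -a₂ s) b₂ x.2
          = (Set.Ico (-1 : ℝ) 0 ×ˢ Set.Ico (-1 : ℝ) 0).indicator
              (fun y => a₁ y.1 * a₂ y.2) x
            + (Set.Icc (0 : ℝ) 1 ×ˢ Set.Icc (0 : ℝ) 1).indicator
              (fun y => b₁ y.1 * b₂ y.2) x) ∧
      (pieceFactor (fun s => -a₁ s) (fun s => -b₁ s) x.1 *
          pieceFactor (fun s => -a₂ s) (fun s => -b₂ s) x.2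
          = (Set.Ico (-1 : ℝ) 0 ×ˢ Set.Ico (-1 : ℝ) 0).indicator
              (fun y => a₁ y.1 * a₂ y.2) x
            + (Set.Icc (0 : ℝ) 1 ×ˢ Set.Icc (0 : ℝ) 1).indicator
              (fun y => b₁ y.1 * b₂ y.2) x) := by
  rintro ⟨x1, x2⟩ (⟨h1, h2⟩ | ⟨h1, h2⟩)
  · have n1 : x1 ∉ Set.Icc (0:ℝ) 1 := fun h => absurd h.1 (not_le.2 h1.2)
    have n2 : x2 ∉ Set.Icc (0:ℝ) 1 := fun h => absurd h.1 (not_le.2 h2.2)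
    have hA : ((x1, x2) : ℝ × ℝ) ∈ Set.Ico (-1:ℝ) 0 ×ˢ Set.Ico (-1:ℝ) 0 := ⟨h1, h2⟩
    have hB : ((x1, x2) : ℝ × ℝ) ∉ Set.Icc (0:ℝ) 1 ×ˢ Set.Icc (0:ℝ) 1 := fun h => n1 h.1
    refine ⟨?_, ?_, ?_⟩ <;>
    · simp only [pieceFactor]
      rw [Set.indicator_of_mem h1, Set.indicator_of_mem h2, Set.indicator_of_notMem n1,
        Set.indicator_of_notMem n2, Set.indicator_of_mem hA, Set.indicator_of_notMem hB]
      ring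
  · have hn1 : x1 ∉ Set.Ico (-1:ℝ) 0 := fun h => absurd h1.1 (not_le.2 h.2)
    have hn2 : x2 ∉ Set.Ico (-1:ℝ) 0 := fun h => absurd h2.1 (not_le.2 h.2)
    have hB : ((x1, x2) : ℝ × ℝ) ∈ Set.Icc (0:ℝ) 1 ×ˢ Set.Icc (0:ℝ) 1 := ⟨h1, h2⟩
    have hA : ((x1, x2) : ℝ × ℝ) ∉ Set.Ico (-1:ℝ) 0 ×ˢ Set.Ico (-1:ℝ) 0 := fun h => hn1 h.1
    refine ⟨?_, ?_, ?_⟩ <;>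
    · simp only [pieceFactor]
      rw [Set.indicator_of_mem h1, Set.indicator_of_mem h2, Set.indicator_of_notMem hn1,
        Set.indicator_of_notMem hn2, Set.indicator_of_mem hB, Set.indicator_of_notMem hA]
      ring
end
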